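/- For α > 0, n ≥ 0 and 0 ≤ k < 2^{n+1}: f_α((k+1)/2^{n+1}) - f_α(k/2^{n+1}) = (1/2)[f_α((j+1)/2^n) - f_α(j/2^n)] + (-1)^k / 2^{αn}, where j = ⌊k/2⌋. -/
import Mathlib

/-- The tent map `φ(x) = 2 inf{|x-n| : n ∈ ℤ}`. -/
noncomputable def tent (x : ℝ) : ℝ := 2 * ⨅ n : ℤ, |x - (n:ℝ)|

/-- `f_α(x) = ∑_{j=0}^∞ 2^{-αj} φ(2^j x)`. -/
noncomputable def takagi (α x : ℝ) : ℝ :=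
  ∑' j : ℕ, (1 / (2:ℝ) ^ (α * (j:ℝ))) * tent ((2:ℝ) ^ (j:ℕ) * x)

lemma tent_eq_round (x : ℝ) : tent x = 2 * |x - round x| := by
  unfold tent
  congr 1
  apply le_antisymm
  · exact ciInf_le ⟨0, by rintro y ⟨n, rfl⟩; positivity⟩ (round x)
  · exact le_ciInf fun n => round_le x n

lemma tent_eq {x : ℝ} (t : ℤ) (h : |x - t| ≤ 1/2) : tent x = 2 * |x - t| := by
  rw [tent_eq_round]
  congr 1
  by_cases ht : round x = t
  · rw [ht]
  · have h1 : (1:ℝ) ≤ |(round x : ℝ) - t| := by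
      have : round x - t ≠ 0 := sub_ne_zero_of_ne (by exact_mod_cast ht)
      have := Int.one_le_abs this
      calc (1:ℝ) ≤ |(round x - t : ℤ)| := by exact_mod_cast this
        _ = |(round x : ℝ) - t| := by push_cast; ring_nf
    have h2 : |x - round x| ≤ |x - t| := round_le x t
    have h3 : |(round x:ℝ) - t| ≤ |(round x:ℝ) - x| + |x - t| := abs_sub_le _ _ _
    have h4 : |(round x:ℝ) - x| = |x - round x| := abs_sub_comm _ _
    linarith

lemma tent_natCast (m : ℕ) : tent (m:ℝ) = 0 := by
  have := tent_eq (x := (m:ℝ)) (m:ℤ) (by rw [Int.cast_natCast, sub_self, abs_zero]; norm_num)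
  simpa using this

lemma tent_nonneg (x : ℝ) : 0 ≤ tent x := by
  rw [tent_eq_round]; positivity

lemma tent_le_one (x : ℝ) : tent x ≤ 1 := by
  rw [tent_eq_round]
  have := abs_sub_round x
  linarith

lemma takagi_summable (α : ℝ) (hα : 0 < α) (x : ℝ) :
    Summable fun j : ℕ => (1 / (2:ℝ) ^ (α * (j:ℝ))) * tent ((2:ℝ) ^ (j:ℕ) * x) := by
  apply Summable.of_nonneg_of_le (fun j => mul_nonneg (by positivity) (tent_nonneg _))
    (f := fun j : ℕ => ((1:ℝ) / 2 ^ α) ^ j)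
  · intro j
    have h1 : ((1:ℝ) / 2 ^ α) ^ j = 1 / (2:ℝ) ^ (α * (j:ℝ)) := by
      rw [div_pow, one_pow, ← Real.rpow_natCast ((2:ℝ) ^ α) j, ← Real.rpow_mul (by norm_num)]
    rw [h1]
    calc (1 / (2:ℝ) ^ (α * (j:ℝ))) * tent ((2:ℝ) ^ (j:ℕ) * x)
        ≤ (1 / (2:ℝ) ^ (α * (j:ℝ))) * 1 := by
          apply mul_le_mul_of_nonneg_left (tent_le_one _)
          positivity
      _ = 1 / (2:ℝ) ^ (α * (j:ℝ)) := mul_one _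
  · apply summable_geometric_of_lt_one (by positivity)
    rw [div_lt_one (by positivity)]
    calc (1:ℝ) = 2 ^ (0:ℝ) := (Real.rpow_zero 2).symm
      _ < 2 ^ α := Real.rpow_lt_rpow_left_iff (by norm_num) |>.mpr hα

lemma takagi_rec (α : ℝ) (hα : 0 < α) (x : ℝ) :
    takagi α x = tent x + (1 / (2:ℝ) ^ α) * takagi α (2 * x) := by
  unfold takagi
  rw [Summable.tsum_eq_zero_add (takagi_summable α hα x)]
  have h0 : (1 / (2:ℝ) ^ (α * ((0:ℕ):ℝ))) * tent ((2:ℝ) ^ (0:ℕ) * x) = tent x := by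
    norm_num
  rw [h0]
  congr 1
  rw [← tsum_mul_left]
  apply tsum_congr
  intro j
  have h1 : (2:ℝ) ^ (α * ((j:ℕ)+1:ℕ)) = 2 ^ α * 2 ^ (α * (j:ℝ)) := by
    push_cast
    rw [mul_add, mul_one, Real.rpow_add (by norm_num)]
    ring
  have h2 : (2:ℝ) ^ ((j:ℕ)+1:ℕ) * x = (2:ℝ) ^ (j:ℕ) * (2 * x) := by
    rw [pow_succ]; ring
  rw [h1, h2]
  ring

lemma takagi_natCast (α : ℝ) (m : ℕ) : takagi α (m:ℝ) = 0 := by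
  unfold takagi
  have : ∀ j : ℕ, (1 / (2:ℝ) ^ (α * (j:ℝ))) * tent ((2:ℝ) ^ (j:ℕ) * (m:ℝ)) = 0 := by
    intro j
    have : ((2:ℝ) ^ (j:ℕ) * (m:ℝ)) = ((2^j * m : ℕ) : ℝ) := by push_cast; ring
    rw [this, tent_natCast, mul_zero]
  simp only [this, tsum_zero]

lemma tent_mid (d m : ℕ) :
    2 * tent ((2*(m:ℝ)+1)/2^(d+1+1)) = tent ((m:ℝ)/2^(d+1)) + tent (((m:ℝ)+1)/2^(d+1)) := by
  have hpow : (0:ℝ) < 2 ^ (d+1) := by positivity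
  have hpow2 : (0:ℝ) < 2 ^ (d+1+1) := by positivity
  have hps : (2:ℝ) ^ (d+1+1) = 2^(d+1) * 2 := pow_succ 2 (d+1)
  obtain ⟨q, s, hm, hslt⟩ : ∃ q s : ℕ, m = 2^(d+1) * q + s ∧ s < 2^(d+1) :=
    ⟨m / 2^(d+1), m % 2^(d+1), (Nat.div_add_mod m (2^(d+1))).symm, Nat.mod_lt _ (by positivity)⟩
  have hmr : (m:ℝ) = 2^(d+1) * q + s := by push_cast [hm]; ring
  have hsr : (0:ℝ) ≤ s := Nat.cast_nonneg s
  have hsltr : (s:ℝ) < 2^(d+1) := by exact_mod_cast hslt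
  have em : (m:ℝ)/2^(d+1) = (q:ℝ) + (s:ℝ)/2^(d+1) := by rw [hmr]; field_simp
  have em1 : ((m:ℝ)+1)/2^(d+1) = (q:ℝ) + ((s:ℝ)+1)/2^(d+1) := by
    rw [hmr]; field_simp; ring
  have emid : (2*(m:ℝ)+1)/2^(d+1+1) = (q:ℝ) + (2*(s:ℝ)+1)/2^(d+1+1) := by
    rw [hmr, hps]; field_simp; ring
  rw [em, em1, emid]
  have key1 : ∀ u : ℝ, 0 ≤ u → u ≤ 1/2 → tent ((q:ℝ) + u) = 2 * u := by
    intro u h1 h2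
    have habs : |(q:ℝ) + u - ((q:ℤ):ℝ)| = u := by
      push_cast; rw [add_sub_cancel_left, abs_of_nonneg h1]
    rw [tent_eq (q:ℤ) (by rw [habs]; exact h2), habs]
  have key2 : ∀ u : ℝ, 1/2 ≤ u → u ≤ 1 → tent ((q:ℝ) + u) = 2 * (1 - u) := by
    intro u h1 h2
    have habs : |(q:ℝ) + u - (((q:ℤ)+1 : ℤ):ℝ)| = 1 - u := by
      push_cast; rw [abs_of_nonpos (by linarith)]; ring
    rw [tent_eq ((q:ℤ)+1) (by rw [habs]; linarith), habs]
  by_cases hcase : 2*(s+1) ≤ 2^(d+1)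
  · have hc : 2*((s:ℝ)+1) ≤ 2^(d+1) := by exact_mod_cast hcase
    rw [key1 ((2*(s:ℝ)+1)/2^(d+1+1)) (by positivity)
          (by rw [div_le_iff₀ hpow2, hps]; linarith),
        key1 ((s:ℝ)/2^(d+1)) (by positivity) (by rw [div_le_iff₀ hpow]; linarith),
        key1 (((s:ℝ)+1)/2^(d+1)) (by positivity) (by rw [div_le_iff₀ hpow]; linarith)]
    rw [hps]; field_simp; ring
  · have hc : (2:ℝ)^(d+1) ≤ 2*(s:ℝ) := by
      have hp : (2:ℕ)^(d+1) = 2*2^d := by rw [pow_succ]; ring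
      have : (2:ℕ)^(d+1) ≤ 2*s := by omega
      exact_mod_cast this
    have hs1 : (s:ℝ)+1 ≤ 2^(d+1) := by
      have : s+1 ≤ 2^(d+1) := hslt
      exact_mod_cast this
    rw [key2 ((2*(s:ℝ)+1)/2^(d+1+1)) (by rw [le_div_iff₀ hpow2, hps]; linarith)
          (by rw [div_le_one hpow2, hps]; linarith),
        key2 ((s:ℝ)/2^(d+1)) (by rw [le_div_iff₀ hpow]; linarith)
          (by rw [div_le_one hpow]; linarith),
        key2 (((s:ℝ)+1)/2^(d+1)) (by rw [le_div_iff₀ hpow]; linarith)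
          (by rw [div_le_one hpow]; linarith)]
    rw [hps]; field_simp; ring

lemma takagi_mid (α : ℝ) (hα : 0 < α) : ∀ n m : ℕ,
    takagi α ((2*(m:ℝ)+1)/2^(n+1))
      = (takagi α ((m:ℝ)/2^n) + takagi α (((m:ℝ)+1)/2^n))/2 + 1/(2:ℝ)^(α*(n:ℝ)) := by
  intro n
  induction n with
  | zero =>
    intro m
    have e2 : 2*((2*(m:ℝ)+1)/2^(0+1)) = ((2*m+1:ℕ):ℝ) := by push_cast; ring
    rw [takagi_rec α hα, e2, takagi_natCast]
    have et : tent ((2*(m:ℝ)+1)/2^(0+1)) = 1 := by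
      have habs : |(2*(m:ℝ)+1)/2^(0+1) - ((m:ℤ):ℝ)| = 1/2 := by
        have h : (2*(m:ℝ)+1)/2^(0+1) - ((m:ℤ):ℝ) = 1/2 := by push_cast; ring
        rw [h]; norm_num
      rw [tent_eq (m:ℤ) (le_of_eq habs), habs]; norm_num
    rw [et]
    have ea : takagi α ((m:ℝ)/2^0) = 0 := by
      rw [show (m:ℝ)/2^0 = ((m:ℕ):ℝ) by norm_num]; exact takagi_natCast α m
    have eb : takagi α (((m:ℝ)+1)/2^0) = 0 := by
      rw [show ((m:ℝ)+1)/2^0 = ((m+1:ℕ):ℝ) by push_cast; ring]; exact takagi_natCast α (m+1)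
    rw [ea, eb]
    simp [Real.rpow_zero]
  | succ n IH =>
    intro m
    have e2 : 2*((2*(m:ℝ)+1)/2^(n+1+1)) = (2*(m:ℝ)+1)/2^(n+1) := by
      rw [pow_succ]; field_simp
    have ea : 2*((m:ℝ)/2^(n+1)) = (m:ℝ)/2^n := by rw [pow_succ]; field_simp
    have eb : 2*(((m:ℝ)+1)/2^(n+1)) = ((m:ℝ)+1)/2^n := by rw [pow_succ]; field_simp
    rw [takagi_rec α hα ((2*(m:ℝ)+1)/2^(n+1+1)), e2, IH m,
        takagi_rec α hα ((m:ℝ)/2^(n+1)), ea,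
        takagi_rec α hα (((m:ℝ)+1)/2^(n+1)), eb]
    have hmid := tent_mid n m
    have hcast : α * (((n+1:ℕ)):ℝ) = α*((n:ℝ)+1) := by push_cast; ring
    have hr : (2:ℝ)^(α*(((n+1:ℕ)):ℝ)) = 2^α * 2^(α*(n:ℝ)) := by
      rw [hcast, mul_add, mul_one, Real.rpow_add (by norm_num)]; ring
    rw [hr]
    linear_combination hmid / 2

theorem takagi_diff_recursion (α : ℝ) (hα : 0 < α) (n k : ℕ) (hk : k < 2 ^ (n + 1)) :
    takagi α (((k:ℝ) + 1) / 2 ^ (n + 1)) - takagi α ((k:ℝ) / 2 ^ (n + 1))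
      = (1 / 2) * (takagi α ((((k / 2 : ℕ):ℝ) + 1) / 2 ^ n)
                    - takagi α (((k / 2 : ℕ):ℝ) / 2 ^ n))
        + (-1:ℝ) ^ k / (2:ℝ) ^ (α * (n:ℝ)) := by
  rcases Nat.even_or_odd k with ⟨m, hm⟩ | ⟨m, hm⟩
  · -- k = m + m
    have hk2 : k / 2 = m := by omega
    have hneg : (-1:ℝ) ^ k = 1 := Even.neg_one_pow ⟨m, hm⟩
    have hkr : (k:ℝ) = 2*(m:ℝ) := by rw [hm]; push_cast; ring
    rw [hk2, hneg, hkr]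
    have e1 : (2*(m:ℝ))/2^(n+1) = (m:ℝ)/2^n := by rw [pow_succ]; field_simp
    have e2 : (2*(m:ℝ)+1)/2^(n+1) = (2*(m:ℝ)+1)/2^(n+1) := rfl
    rw [show (2*(m:ℝ)+1)/2^(n+1) = (2*(m:ℝ)+1)/2^(n+1) from rfl] at e2
    have hmid := takagi_mid α hα n m
    rw [show 2*(m:ℝ)+1 = 2*(m:ℝ)+1 from rfl] at hmid
    rw [show ((2*(m:ℝ)) + 1) / 2^(n+1) = (2*(m:ℝ)+1)/2^(n+1) by ring_nf] at *
    rw [hmid, e1]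
    ring
  · -- k = 2*m + 1
    have hk2 : k / 2 = m := by omega
    have hneg : (-1:ℝ) ^ k = -1 := Odd.neg_one_pow ⟨m, hm⟩
    have hkr : (k:ℝ) = 2*(m:ℝ)+1 := by rw [hm]; push_cast; ring
    rw [hk2, hneg, hkr]
    have e1 : (2*(m:ℝ)+1+1)/2^(n+1) = ((m:ℝ)+1)/2^n := by rw [pow_succ]; field_simp; ring
    have hmid := takagi_mid α hα n m
    rw [e1, hmid]
    ring
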